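/- Let H be a Hilbert space, z ∈ H, and for i = 1,2 let wᵢ ∈ H and let uᵢ be optimal for Jᵢ(u) = ‖wᵢ + Lu - z‖² over the ball {‖u‖_∞ ≤ Mᵢ} in L^∞((t₀,T);H), where L is a bounded linear operator. Assume 0 < M₁ ≤ M₂. Then using the first-order optimality conditions ⟨w₁ + Lu₁ - z, L((M₁/M₂)u₂ - u₁)⟩ ≥ 0 and ⟨w₂ + Lu₂ - z, L((M₂/M₁)u₁ - u₂)⟩ ≥ 0, one obtains ‖(w₁ - z)/M₁ - (w₂ - z)/M₂‖ ≥ ‖L(u₂/M₂ - u₁/M₁)‖. -/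

import Mathlib

/-!
Write `v = u₂/M₂ - u₁/M₁` and `rᵢ = wᵢ + L uᵢ - z`. Since `(M₁/M₂) u₂ - u₁ = M₁ v` and
`(M₂/M₁) u₁ - u₂ = -M₂ v`, the two optimality conditions say `⟪r₁, L v⟫ ≥ 0 ≥ ⟪r₂, L v⟫`.
With `p = (w₁ - z)/M₁ - (w₂ - z)/M₂` one has `p - L v = r₁/M₁ - r₂/M₂`, hence
`⟪p - L v, L v⟫ ≥ 0`, and then `‖L v‖² ≤ ⟪p, L v⟫ ≤ ‖p‖ ‖L v‖` by Cauchy–Schwarz.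
-/

open scoped RealInnerProductSpace

section

variable {H : Type*} [NormedAddCommGroup H] [InnerProductSpace ℝ H]

theorem real_inner_smul_right_nonneg_iff {x y : H} {c : ℝ} (hc : 0 < c) :
    0 ≤ ⟪x, c • y⟫ ↔ 0 ≤ ⟪x, y⟫ := by
  rw [real_inner_smul_right, mul_nonneg_iff_of_pos_left hc]

theorem norm_le_of_inner_sub_nonneg {p d : H} (h : 0 ≤ ⟪p - d, d⟫) : ‖d‖ ≤ ‖p‖ := by
  rw [inner_sub_left, real_inner_self_eq_norm_sq, sub_nonneg] at h
  have hcs : ‖d‖ * ‖d‖ ≤ ‖p‖ * ‖d‖ := by nlinarith [real_inner_le_norm p d]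
  rcases (norm_nonneg d).eq_or_lt with hd | hd
  · rw [← hd]
    exact norm_nonneg p
  · exact le_of_mul_le_mul_right hcs hd

end

theorem stmt12 {H U : Type*} [NormedAddCommGroup H] [InnerProductSpace ℝ H]
    [NormedAddCommGroup U] [NormedSpace ℝ U]
    (L : U →L[ℝ] H) (z w₁ w₂ : H) (u₁ u₂ : U) (M₁ M₂ : ℝ)
    (hM₁ : 0 < M₁) (hM₁₂ : M₁ ≤ M₂)
    (hopt₁ : 0 ≤ ⟪w₁ + L u₁ - z, L ((M₁ / M₂) • u₂ - u₁)⟫)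
    (hopt₂ : 0 ≤ ⟪w₂ + L u₂ - z, L ((M₂ / M₁) • u₁ - u₂)⟫) :
    ‖L ((1 / M₂) • u₂ - (1 / M₁) • u₁)‖ ≤
      ‖(1 / M₁) • (w₁ - z) - (1 / M₂) • (w₂ - z)‖ := by
  have hM₂ : 0 < M₂ := hM₁.trans_le hM₁₂
  set v := (1 / M₂) • u₂ - (1 / M₁) • u₁
  have h₁ : 0 ≤ ⟪w₁ + L u₁ - z, L v⟫ := by
    have hv : (M₁ / M₂) • u₂ - u₁ = M₁ • v := by match_scalars <;> field_simp
    rwa [hv, map_smul, real_inner_smul_right_nonneg_iff hM₁] at hopt₁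
  have h₂ : ⟪w₂ + L u₂ - z, L v⟫ ≤ 0 := by
    have hv : (M₂ / M₁) • u₁ - u₂ = M₂ • -v := by match_scalars <;> field_simp
    rwa [hv, map_smul, map_neg, real_inner_smul_right_nonneg_iff hM₂, inner_neg_right,
      neg_nonneg] at hopt₂
  apply norm_le_of_inner_sub_nonneg
  have hsplit : (1 / M₁) • (w₁ - z) - (1 / M₂) • (w₂ - z) - L v =
      (1 / M₁) • (w₁ + L u₁ - z) - (1 / M₂) • (w₂ + L u₂ - z) := by
    simp only [v, map_sub, map_smul]
    module
  rw [hsplit, inner_sub_left, real_inner_smul_left, real_inner_smul_left, sub_nonneg]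
  exact (mul_nonpos_of_nonneg_of_nonpos (by positivity) h₂).trans
    (mul_nonneg (by positivity) h₁)
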